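/- Let C be a k-dimensional ZMod 2-linear subspace of (Fin n → ZMod 2) and let p : Fin n → ℝ with 0 ≤ p i ≤ 1 be the coordinate 1-probabilities (not necessarily all equal and not necessarily below 1/2). Define the most probable vector x_max by x_max i = 1 if p i ≥ 1/2 and x_max i = 0 if p i < 1/2. Then the coset of C containing x_max is at least as probable as every coset: for every vector a, P_p[x_max + C] ≥ P_p[a + C]. -/

import Mathlib

open Classical in
/-- Probability of a set of bit-vectors under independent, not necessarily identically
distributed bits with coordinate 1-probabilities `p`. -/
noncomputable def probOf {n : ℕ} (p : Fin n → ℝ) (S : Set (Fin n → ZMod 2)) : ℝ :=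
  ∑ x : Fin n → ZMod 2,
    if x ∈ S then (∏ i, if x i = 1 then p i else 1 - p i) else 0

/-!
Flipping the bits with `p i ≥ 1/2` (replacing `p i` by `1 - p i`) moves `xmax` to `0`, so we may
assume `p i ≤ 1/2` for all `i` and have to show that `C` itself is the most probable coset.
Writing each factor as `1/2 + (1/2 - p i) (-1)^(x i)` and expanding the product, the probability
of a vector becomes a combination of parity characters `x ↦ ∏_{i ∈ U} (-1)^(x i)` with
nonnegative coefficients. Summed over a coset `e + C`, a character `χ` contributes
`χ e · ∑_{c ∈ C} χ c`, and the character sum over a subgroup is `|C|` or `0`; as `|χ e| = 1`,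
every contribution is largest at `e = 0`.
-/

open Finset

namespace AddChar

variable {G : Type*} [AddGroup G]

lemma abs_apply_eq_one [Fintype G] (ψ : AddChar G ℝ) (x : G) : |ψ x| = 1 := by
  have h : ψ x ^ Fintype.card G = 1 := by
    rw [← map_nsmul_eq_pow, card_nsmul_eq_zero, map_zero_eq_one]
  exact (pow_eq_one_iff_of_nonneg (abs_nonneg _) Fintype.card_ne_zero).1 (by rw [← abs_pow, h, abs_one])

lemma sum_addSubgroup_nonneg (ψ : AddChar G ℝ) (H : AddSubgroup G) [Fintype H] :
    0 ≤ ∑ h : H, ψ h := by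
  classical
  have h := sum_eq_ite (ψ.compAddMonoidHom H.subtype)
  simp only [compAddMonoidHom_apply, AddSubgroup.coe_subtype] at h
  rw [h]
  split_ifs <;> positivity

lemma sum_add_addSubgroup_le [Fintype G] (ψ : AddChar G ℝ) (H : AddSubgroup G) [Fintype H]
    (e : G) : ∑ h : H, ψ (e + h) ≤ ∑ h : H, ψ h := by
  simp_rw [map_add_eq_mul]
  rw [← mul_sum]
  exact mul_le_of_le_one_left (sum_addSubgroup_nonneg ψ H) (le_of_abs_le (abs_apply_eq_one ψ e).le)

lemma sum_add_addSubgroup_le_of_nonneg_combination [Fintype G] {ι : Type*} (s : Finset ι)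
    (c : ι → ℝ) (hc : ∀ j ∈ s, 0 ≤ c j) (ψ : ι → AddChar G ℝ) {f : G → ℝ}
    (hf : ∀ x, f x = ∑ j ∈ s, c j * ψ j x) (H : AddSubgroup G) [Fintype H] (e : G) :
    ∑ h : H, f (e + h) ≤ ∑ h : H, f h := by
  have hswap : ∀ g : H → G, ∑ h : H, f (g h) = ∑ j ∈ s, c j * ∑ h : H, ψ j (g h) := fun g => by
    simp_rw [hf, mul_sum]
    exact sum_comm
  rw [hswap, hswap]
  exact sum_le_sum fun j hj => mul_le_mul_of_nonneg_left (sum_add_addSubgroup_le _ _ _) (hc j hj)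

end AddChar

lemma ZMod.eq_zero_or_eq_one (b : ZMod 2) : b = 0 ∨ b = 1 := by
  revert b
  decide

noncomputable def signChar : AddChar (ZMod 2) ℝ :=
  AddChar.zmodChar 2 (by norm_num : (-1 : ℝ) ^ 2 = 1)

lemma signChar_one : signChar 1 = -1 := by
  simp [signChar, AddChar.zmodChar_apply, ZMod.val_one]

lemma ite_eq_half_add_signChar (p : ℝ) (b : ZMod 2) :
    (if b = 1 then p else 1 - p) = 1 / 2 + (1 / 2 - p) * signChar b := by
  rcases ZMod.eq_zero_or_eq_one b with rfl | rfl
  · rw [if_neg zero_ne_one, AddChar.map_zero_eq_one]; ring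
  · rw [if_pos rfl, signChar_one]; ring

noncomputable def paritySign {ι : Type*} (s : Finset ι) : AddChar (ι → ZMod 2) ℝ :=
  ∏ i ∈ s, signChar.compAddMonoidHom (Pi.evalAddMonoidHom (fun _ => ZMod 2) i)

lemma paritySign_apply {ι : Type*} (s : Finset ι) (x : ι → ZMod 2) :
    paritySign s x = ∏ i ∈ s, signChar (x i) := by
  simp [paritySign, AddChar.prod_apply]

noncomputable def pointProb {ι : Type*} [Fintype ι] (p : ι → ℝ) (x : ι → ZMod 2) : ℝ :=
  ∏ i, if x i = 1 then p i else 1 - p i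

lemma pointProb_eq_sum_paritySign {ι : Type*} [Fintype ι] [DecidableEq ι] (p : ι → ℝ)
    (x : ι → ZMod 2) :
    pointProb p x =
      ∑ t : Finset ι, ((1 / 2) ^ t.card * ∏ i ∈ tᶜ, (1 / 2 - p i)) * paritySign tᶜ x := by
  simp_rw [pointProb, ite_eq_half_add_signChar, Fintype.prod_add, paritySign_apply,
    prod_mul_distrib, prod_const]
  ring_nf

lemma sum_pointProb_add_le {ι : Type*} [Fintype ι] [DecidableEq ι] (p : ι → ℝ)
    (hp : ∀ i, p i ≤ 1 / 2) (H : AddSubgroup (ι → ZMod 2)) [Fintype H] (e : ι → ZMod 2) :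
    ∑ h : H, pointProb p (e + h) ≤ ∑ h : H, pointProb p h :=
  AddChar.sum_add_addSubgroup_le_of_nonneg_combination _ _
    (fun _ _ => mul_nonneg (by positivity) (prod_nonneg fun i _ => sub_nonneg.2 (hp i))) _
    (pointProb_eq_sum_paritySign p) H e

def flipProb {ι : Type*} (p : ι → ℝ) (y : ι → ZMod 2) (i : ι) : ℝ :=
  if y i = 1 then 1 - p i else p i

lemma pointProb_eq_flipProb {ι : Type*} [Fintype ι] (p : ι → ℝ) (y x : ι → ZMod 2) :
    pointProb p x = pointProb (flipProb p y) (x + y) := by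
  refine prod_congr rfl fun i _ => ?_
  simp only [flipProb, Pi.add_apply]
  rcases ZMod.eq_zero_or_eq_one (x i) with hx | hx <;>
    rcases ZMod.eq_zero_or_eq_one (y i) with hy | hy <;> simp [hx, hy]

lemma flipProb_le_half {ι : Type*} {p : ι → ℝ} {xmax : ι → ZMod 2}
    (hxmax : ∀ i, xmax i = if (1 : ℝ) / 2 ≤ p i then 1 else 0) (i : ι) :
    flipProb p xmax i ≤ 1 / 2 := by
  rw [flipProb, hxmax]
  split_ifs <;> simp_all <;> linarith

lemma probOf_coset {n : ℕ} (p : Fin n → ℝ) (H : AddSubgroup (Fin n → ZMod 2)) [Fintype H]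
    (a : Fin n → ZMod 2) :
    probOf p ((a + ·) '' (H : Set _)) = ∑ h : H, pointProb p (a + h) := by
  classical
  rw [probOf, ← Equiv.sum_comp (Equiv.addLeft a)]
  simp only [Equiv.coe_addLeft, Set.image_add_left, Set.mem_preimage, neg_add_cancel_left,
    SetLike.mem_coe]
  rw [← sum_filter]
  exact sum_subtype _ (by simp) _

theorem most_probable_coset {n : ℕ}
    (C : Submodule (ZMod 2) (Fin n → ZMod 2))
    (p : Fin n → ℝ)
    (xmax : Fin n → ZMod 2)
    (hxmax : ∀ i, xmax i = if (1 : ℝ) / 2 ≤ p i then 1 else 0)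
    (a : Fin n → ZMod 2) :
    probOf p ((a + ·) '' (C : Set _)) ≤ probOf p ((xmax + ·) '' (C : Set _)) := by
  classical
  have hcode := sum_pointProb_add_le _ (flipProb_le_half hxmax) C.toAddSubgroup (a + xmax)
  rw [← C.coe_toAddSubgroup, probOf_coset, probOf_coset]
  simp_rw [pointProb_eq_flipProb p xmax (_ + _)]
  convert hcode using 3 with c
  · abel
  · rw [add_right_comm, ZModModule.add_self, zero_add]
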